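/- arXiv:2412.16450 — 2 statements merged into one kernel-verified Lean document; each statement's English description precedes it below -/
import Mathlib

section
/- The codewords of the [[4,1]] amplitude-damping code, |0̄⟩ = (1/√2)(|0000⟩ + |1111⟩) and |1̄⟩ = (1/√2)(|0011⟩ + |1100⟩), satisfy exactly ⟨0̄| A_k† A_k |0̄⟩ - ⟨1̄| A_k† A_k |1̄⟩ = ½ γ² (2-γ)² for k = 0000, where 𝒜_k = A_{k₀}⊗A_{k₁}⊗A_{k₂}⊗A_{k₃}. In particular this difference is O(γ²) as γ → 0. -/
open Matrix

noncomputable def A0 (γ : ℝ) : Matrix (Fin 2) (Fin 2) ℂ :=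
  !![1, 0; 0, (Real.sqrt (1 - γ) : ℂ)]

noncomputable def A1 (γ : ℝ) : Matrix (Fin 2) (Fin 2) ℂ :=
  !![0, (Real.sqrt γ : ℂ); 0, 0]

noncomputable def A (γ : ℝ) : Fin 2 → Matrix (Fin 2) (Fin 2) ℂ := ![A0 γ, A1 γ]

/-- 𝒜_k = A_{k₀}⊗A_{k₁}⊗A_{k₂}⊗A_{k₃}. -/
noncomputable def AA (γ : ℝ) (k : Fin 4 → Fin 2) :
    Matrix (Fin 4 → Fin 2) (Fin 4 → Fin 2) ℂ :=
  fun x y => ∏ j, A γ (k j) (x j) (y j)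

def ket (c : Fin 4 → Fin 2) : (Fin 4 → Fin 2) → ℂ := fun x => if x = c then 1 else 0

/-- |0̄⟩ = (1/√2)(|0000⟩+|1111⟩). -/
noncomputable def code0 : (Fin 4 → Fin 2) → ℂ :=
  (1 / (Real.sqrt 2 : ℂ)) • (ket (fun _ => 0) + ket (fun _ => 1))

/-- |1̄⟩ = (1/√2)(|0011⟩+|1100⟩). -/
noncomputable def code1 : (Fin 4 → Fin 2) → ℂ :=
  (1 / (Real.sqrt 2 : ℂ)) •
    (ket ![0, 0, 1, 1] + ket ![1, 1, 0, 0])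

/-- Inner product ⟨u|v⟩ = ∑ conj(uₓ)vₓ. -/
noncomputable def ip (u v : (Fin 4 → Fin 2) → ℂ) : ℂ :=
  ∑ x, (starRingEnd ℂ) (u x) * v x

noncomputable def dv (γ : ℝ) : (Fin 4 → Fin 2) → ℂ := fun x => ∏ j, A γ 0 (x j) (x j)

lemma A_offdiag (γ : ℝ) (a b : Fin 2) (h : a ≠ b) : A γ 0 a b = 0 := by
  fin_cases a <;> fin_cases b <;> simp_all [A, A0]

lemma AA_diag (γ : ℝ) : AA γ (fun _ => 0) = Matrix.diagonal (dv γ) := by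
  ext x y
  by_cases h : x = y
  · subst h; simp [AA, dv, Matrix.diagonal]
  · rw [Matrix.diagonal_apply_ne _ h]
    obtain ⟨j, hj⟩ := Function.ne_iff.mp h
    exact Finset.prod_eq_zero (Finset.mem_univ j) (A_offdiag γ _ _ hj)

lemma ip_diag (m : (Fin 4 → Fin 2) → ℂ) (a b : Fin 4 → Fin 2) (hab : a ≠ b) (α : ℂ) :
    ip (α • (ket a + ket b)) ((Matrix.diagonal m).mulVec (α • (ket a + ket b))) =
      (starRingEnd ℂ) α * α * (m a + m b) := by
  have hpt : ∀ x, (starRingEnd ℂ) ((α • (ket a + ket b)) x) *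
      ((Matrix.diagonal m).mulVec (α • (ket a + ket b)) x) =
      (if x = a then (starRingEnd ℂ) α * α * m a else 0) +
      (if x = b then (starRingEnd ℂ) α * α * m b else 0) := by
    intro x
    simp only [Matrix.mulVec_diagonal, Pi.smul_apply, Pi.add_apply, ket, smul_eq_mul]
    split_ifs with ha hb hb
    · exact absurd (ha ▸ hb) hab
    · subst ha; simp; ring
    · subst hb; simp; ring
    · simp
  rw [ip]
  simp only [hpt]
  rw [Finset.sum_add_distrib, Finset.sum_ite_eq' _ a, Finset.sum_ite_eq' _ b]
  simp; ring

/-- For the no-damping event k = 0000, ⟨0̄|𝒜ᴴ𝒜|0̄⟩ - ⟨1̄|𝒜ᴴ𝒜|1̄⟩ = ½γ²(2-γ)². -/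
theorem code4_diagonal_difference (γ : ℝ) (h0 : 0 ≤ γ) (h1 : γ ≤ 1) :
    ip code0 (((AA γ (fun _ => 0))ᴴ * AA γ (fun _ => 0)).mulVec code0) -
      ip code1 (((AA γ (fun _ => 0))ᴴ * AA γ (fun _ => 0)).mulVec code1) =
      ((γ^2 * (2 - γ)^2 / 2 : ℝ) : ℂ) := by
  have hM : (AA γ (fun _ => 0))ᴴ * AA γ (fun _ => 0) =
      Matrix.diagonal (fun x => (starRingEnd ℂ) (dv γ x) * dv γ x) := by
    rw [AA_diag, Matrix.diagonal_conjTranspose, Matrix.diagonal_mul_diagonal]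
    rfl
  rw [hM, code0, code1,
    ip_diag _ _ _ (by decide) _, ip_diag _ _ _ (by decide) _]
  have hs : ((Real.sqrt (1 - γ) : ℝ) : ℂ) * ((Real.sqrt (1 - γ) : ℝ) : ℂ) = ((1 - γ : ℝ) : ℂ) := by
    rw [← Complex.ofReal_mul, Real.mul_self_sqrt (by linarith)]
  have h2 : ((Real.sqrt 2 : ℝ) : ℂ) * ((Real.sqrt 2 : ℝ) : ℂ) = 2 := by
    rw [← Complex.ofReal_mul, Real.mul_self_sqrt (by norm_num)]; norm_num
  have hα : (starRingEnd ℂ) (1 / (Real.sqrt 2 : ℂ)) * (1 / (Real.sqrt 2 : ℂ)) = 1 / 2 := by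
    rw [map_div₀, _root_.map_one, Complex.conj_ofReal, div_mul_div_comm, one_mul, h2]
  rw [hα]
  simp only [dv, Fin.prod_univ_four]
  simp [A, A0, Complex.conj_ofReal]
  set t := ((Real.sqrt (1 - γ) : ℝ) : ℂ) with ht
  field_simp
  ring_nf
  rw [show t ^ 8 = (t * t) ^ 4 by ring, show t ^ 4 = (t * t) ^ 2 by ring, hs]
  push_cast
  ring
end

section
/- For the [[4,1]] amplitude-damping code and any two error strings k, ℓ ∈ {0,1}⁴ of Hamming weight at most 1 with k ≠ ℓ, the error states are orthogonal within each codeword: ⟨0̄| 𝒜_k† 𝒜_ℓ |0̄⟩ = 0 and ⟨1̄| 𝒜_k† 𝒜_ℓ |1̄⟩ = 0. Moreover for any such k, ℓ (including k = ℓ), ⟨0̄| 𝒜_k† 𝒜_ℓ |1̄⟩ = 0. -/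
open Matrix

def wt (x : Fin 4 → Fin 2) : ℕ := ∑ j, (x j).val

def pe : (Fin 2 × Fin 2 × Fin 2 × Fin 2) ≃ (Fin 4 → Fin 2) where
  toFun p := ![p.1, p.2.1, p.2.2.1, p.2.2.2]
  invFun x := (x 0, x 1, x 2, x 3)
  left_inv := by decide
  right_inv := by decide

lemma sum_pi (f : (Fin 4 → Fin 2) → ℂ) :
    ∑ x, f x = ∑ a : Fin 2, ∑ b : Fin 2, ∑ c : Fin 2, ∑ d : Fin 2, f ![a,b,c,d] := by
  rw [← Equiv.sum_comp pe f]
  simp [Fintype.sum_prod_type, pe]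

lemma entry (γ : ℝ) (k ℓ c c' : Fin 4 → Fin 2) :
    ((AA γ k)ᴴ * AA γ ℓ) c c' =
      ∏ j, ∑ a : Fin 2, (starRingEnd ℂ) (A γ (k j) a (c j)) * A γ (ℓ j) a (c' j) := by
  rw [Matrix.mul_apply]
  simp only [conjTranspose_apply, AA]
  rw [sum_pi]
  simp only [starRingEnd_apply, Fin.sum_univ_two, Fin.prod_univ_four, star_mul',
    Matrix.cons_val_zero, Matrix.cons_val_one, Matrix.head_cons,
    Matrix.cons_val_two, Matrix.tail_cons, Matrix.cons_val_three]
  ring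

lemma ip_expand (M : Matrix (Fin 4 → Fin 2) (Fin 4 → Fin 2) ℂ) (c1 c2 d1 d2 : Fin 4 → Fin 2) :
    ip ((1 / (Real.sqrt 2 : ℂ)) • (ket c1 + ket c2))
       (M.mulVec ((1 / (Real.sqrt 2 : ℂ)) • (ket d1 + ket d2))) =
      (1 / 2) * (M c1 d1 + M c1 d2 + M c2 d1 + M c2 d2) := by
  simp only [ip, Matrix.mulVec, dotProduct, Pi.smul_apply, Pi.add_apply, ket, smul_eq_mul,
    mul_ite, mul_one, mul_zero, _root_.map_mul, map_add, apply_ite (starRingEnd ℂ),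
    _root_.map_one, map_zero]
  simp only [mul_add, add_mul, Finset.sum_add_distrib, Finset.mul_sum, Finset.sum_ite_eq',
    Finset.mem_univ, if_true, ite_mul, zero_mul]
  simp only [mul_ite, mul_one, mul_zero, ite_mul, zero_mul, Finset.sum_ite_eq',
    Finset.mem_univ, if_true, map_div₀, _root_.map_one, Complex.conj_ofReal]
  have h2 : ((Real.sqrt 2 : ℝ) : ℂ) * ((Real.sqrt 2 : ℝ) : ℂ) = 2 := by
    rw [← Complex.ofReal_mul, Real.mul_self_sqrt (by norm_num)]
    norm_num
  have hne : ((Real.sqrt 2 : ℝ) : ℂ) ≠ 0 := by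
    intro h
    rw [h, mul_zero] at h2
    norm_num at h2
  field_simp
  ring_nf
  rw [show ((Real.sqrt 2 : ℝ) : ℂ) ^ 2 = 2 by rw [sq, h2]]

lemma wt_cases (k : Fin 4 → Fin 2) (hk : wt k ≤ 1) :
    k = (fun _ => 0) ∨ k = ![1,0,0,0] ∨ k = ![0,1,0,0] ∨ k = ![0,0,1,0] ∨ k = ![0,0,0,1] := by
  revert hk
  revert k
  decide

set_option maxHeartbeats 1000000 in
/-- Orthogonality of error states for the [[4,1]] AD code under weight ≤ 1 errors. -/
theorem code4_error_orthogonality (γ : ℝ) (h0 : 0 ≤ γ) (h1 : γ ≤ 1)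
    (k ℓ : Fin 4 → Fin 2) (hk : wt k ≤ 1) (hl : wt ℓ ≤ 1) :
    (k ≠ ℓ →
      ip code0 (((AA γ k)ᴴ * AA γ ℓ).mulVec code0) = 0 ∧
      ip code1 (((AA γ k)ᴴ * AA γ ℓ).mulVec code1) = 0) ∧
    ip code0 (((AA γ k)ᴴ * AA γ ℓ).mulVec code1) = 0 := by
  rcases wt_cases k hk with h|h|h|h|h <;> rcases wt_cases ℓ hl with g|g|g|g|g <;>
    subst h <;> subst g <;>
    refine ⟨fun hne => ⟨?_, ?_⟩, ?_⟩ <;>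
    first
      | exact absurd rfl hne
      | (simp only [code0, code1, ip_expand, entry]
         simp only [A, A0, A1, Fin.prod_univ_four, Fin.sum_univ_two,
           Matrix.cons_val_zero, Matrix.cons_val_one, Matrix.head_cons,
           Matrix.cons_val_two, Matrix.tail_cons, Matrix.cons_val_three, Matrix.cons_val',
           Matrix.of_apply, Matrix.empty_val', Matrix.cons_val_fin_one, Matrix.head_fin_const,
           map_zero, _root_.map_one, Complex.conj_ofReal,
           mul_zero, zero_mul, mul_one, one_mul, add_zero, zero_add])
end
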